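/- Let G be a finite simple graph of treewidth at most 2, i.e., suppose there exists a chordal graph M on the same vertex set as G with E(G) ⊆ E(M) and clique number ω(M) ≤ 3. (This includes all series-parallel graphs.) Then G is partially DP-nice. -/

import Mathlib

open SimpleGraph

/-- `DPCover G H L` means `(L, H)` is a cover of the graph `G`:
(1) the sets `L u` partition `V(H)`; (2) each `H[L u]` is complete;
(3) for each edge `uv` of `G`, the edges of `H` between `L u` and `L v` form a matching;
(4) there are no edges of `H` between lists of distinct non-adjacent vertices. -/
structure DPCover {V : Type} (G : SimpleGraph V) {W : Type} (H : SimpleGraph W)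
    (L : V → Finset W) : Prop where
  partition : ∀ w : W, ∃! v : V, w ∈ L v
  cliques : ∀ v : V, ∀ a ∈ L v, ∀ b ∈ L v, a ≠ b → H.Adj a b
  matching : ∀ ⦃u v : V⦄, G.Adj u v → ∀ a ∈ L u, ∀ b ∈ L v, ∀ b' ∈ L v,
      H.Adj a b → H.Adj a b' → b = b'
  nonadj : ∀ ⦃u v : V⦄, u ≠ v → ¬ G.Adj u v → ∀ a ∈ L u, ∀ b ∈ L v, ¬ H.Adj a b

/-- A finset is independent in `H` if no two of its elements are adjacent. -/
def IsIndepFinset {W : Type} (H : SimpleGraph W) (S : Finset W) : Prop :=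
  ∀ a ∈ S, ∀ b ∈ S, ¬ H.Adj a b

/-- The independence number of `H`. -/
noncomputable def indepNum {W : Type} [Fintype W] (H : SimpleGraph W) : ℕ :=
  sSup {n : ℕ | ∃ S : Finset W, IsIndepFinset H S ∧ S.card = n}

/-- The DP-chromatic number of `G`: the least `m` such that every `m`-fold cover `(L, H)`
of `G` admits an `H`-coloring, i.e. an independent set in `H` of size `|V(G)|`. -/
noncomputable def chiDP {V : Type} [Fintype V] (G : SimpleGraph V) : ℕ :=
  sInf {m : ℕ | ∀ (W : Type) (_ : Fintype W) (H : SimpleGraph W) (L : V → Finset W),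
    DPCover G H L → (∀ v, (L v).card = m) →
    ∃ S : Finset W, IsIndepFinset H S ∧ S.card = Fintype.card V}

/-- The partial DP `t`-chromatic number of `G`: the minimum of the independence number
`α(H)` over all `t`-fold covers `(L, H)` of `G`. -/
noncomputable def alphaDP {V : Type} [Fintype V] (G : SimpleGraph V) (t : ℕ) : ℕ :=
  sInf {n : ℕ | ∃ (W : Type) (_ : Fintype W) (H : SimpleGraph W) (L : V → Finset W),
    DPCover G H L ∧ (∀ v, (L v).card = t) ∧ _root_.indepNum H = n}

/-- A graph `G` is partially DP-nice if `α_t^{DP}(G) ≥ t|V(G)|/χ_DP(G)` for all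
`t ∈ {1, …, χ_DP(G)}`. -/
def PartiallyDPNice {V : Type} [Fintype V] (G : SimpleGraph V) : Prop :=
  ∀ t : ℕ, 1 ≤ t → t ≤ chiDP G →
    (t * Fintype.card V : ℚ) / (chiDP G : ℚ) ≤ (alphaDP G t : ℚ)

/-- A graph is chordal if every cycle of length at least 4 has a chord: an edge of the
graph joining two vertices of the cycle that is not an edge of the cycle. -/
def IsChordalGraph {V : Type} (G : SimpleGraph V) : Prop :=
  ∀ ⦃v : V⦄ (c : G.Walk v v), c.IsCycle → 4 ≤ c.length →
    ∃ a b : V, a ∈ c.support ∧ b ∈ c.support ∧ G.Adj a b ∧ s(a, b) ∉ c.edges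

/-!
A chordal graph has a simplicial vertex outside every clique that does not cover it (Dirac).
When `ω(M) ≤ 3` the neighbourhood of a simplicial vertex has at most two vertices, so `M`, and
with it `G ≤ M`, is 2-degenerate, and greedy colouring from lists of size 3 gives
`χ_DP(G) ≤ 3`; for `t = χ_DP(G)` the inequality is then trivial. For `t = 1` a largest colour
class of a `χ_DP(G)`-colouring of `G` (which exists, as DP-colourings of the cover `G □ K_m`
are proper `m`-colourings) is independent and has at least `n / χ_DP(G)` vertices.
For `t = 2 < χ_DP(G) = 3`, deleting a smallest colour class of a 3-colouring of `M` leaves at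
least `2n/3` vertices spanning a triangle-free chordal graph, which is 1-degenerate, so greedy
colouring from lists of size 2 colours all of them.
-/

open Finset

namespace SimpleGraph

variable {V : Type} {M : SimpleGraph V}

theorem Walk.exists_shorter_of_chord {u v a b : V} (p : M.Walk u v) (ha : a ∈ p.support)
    (hb : b ∈ p.support) (hab : M.Adj a b) (hch : s(a, b) ∉ p.edges) :
    ∃ q : M.Walk u v, q.length < p.length ∧ q.support ⊆ p.support := by
  classical
  induction p generalizing a b with
  | nil => simp_all
  | @cons u w v h p ih =>
    have from_start : ∀ b, b ∈ (cons h p).support → M.Adj u b → s(u, b) ∉ (cons h p).edges →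
        ∃ q : M.Walk u v, q.length < (cons h p).length ∧ q.support ⊆ (cons h p).support := by
      intro b hb hub hch
      have hbp : b ∈ p.support := by simpa [hub.ne'] using hb
      have hbw : b ≠ w := by rintro rfl; simp at hch
      refine ⟨cons hub (p.dropUntil b hbp), ?_, ?_⟩
      · simpa using p.length_dropUntil_lt_length hbp hbw
      · simpa using List.Subset.trans (p.support_dropUntil_subset_support hbp)
          (List.subset_cons_self _ _)
    by_cases hau : a = u
    · subst hau; exact from_start b hb hab hch
    by_cases hbu : b = u
    · subst hbu; exact from_start a ha hab.symm (by rwa [Sym2.eq_swap])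
    obtain ⟨q, hlen, hsub⟩ := ih (by simpa [hau] using ha) (by simpa [hbu] using hb) hab
      (fun h' => hch (by simp [h']))
    exact ⟨cons h q, by simpa using hlen, List.cons_subset_cons _ hsub⟩

theorem Walk.IsPath.isCycle_cons_cons {x u v : V} {q : M.Walk u v} (hq : q.IsPath)
    (hxq : x ∉ q.support) (huv : u ≠ v) (hxu : M.Adj x u) (hvx : M.Adj v x) :
    (cons hvx (cons hxu q)).IsCycle := by
  refine (cons_isCycle_iff _ _).2 ⟨(cons_isPath_iff _ _).2 ⟨hq, hxq⟩, ?_⟩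
  simp only [edges_cons, List.mem_cons, Sym2.eq, Sym2.rel_iff', Prod.mk.injEq,
    Prod.swap_prod_mk, not_or]
  exact ⟨by grind [Adj.ne], fun h => hxq (q.snd_mem_support_of_mem_edges h)⟩

open Classical in
noncomputable def componentIn (M : SimpleGraph V) (D : Finset V) (z : V) : Finset V :=
  {c ∈ D | ∃ p : M.Walk z c, ∀ w ∈ p.support, w ∈ D}

section componentIn

variable {D : Finset V} {z c d : V}

theorem mem_componentIn :
    c ∈ M.componentIn D z ↔ c ∈ D ∧ ∃ p : M.Walk z c, ∀ w ∈ p.support, w ∈ D := by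
  simp [componentIn]

theorem self_mem_componentIn (hz : z ∈ D) : z ∈ M.componentIn D z :=
  mem_componentIn.2 ⟨hz, Walk.nil, by simpa⟩

theorem componentIn_subset : M.componentIn D z ⊆ D := fun _ hc => (mem_componentIn.1 hc).1

theorem mem_componentIn_of_adj (hc : c ∈ M.componentIn D z) (hd : d ∈ D) (hcd : M.Adj c d) :
    d ∈ M.componentIn D z := by
  obtain ⟨-, p, hp⟩ := mem_componentIn.1 hc
  refine mem_componentIn.2 ⟨hd, p.concat hcd, fun w hw => ?_⟩
  rw [Walk.support_concat, List.mem_append, List.mem_singleton] at hw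
  exact hw.elim (hp w) (· ▸ hd)

theorem exists_walk_of_mem_componentIn (hc : c ∈ M.componentIn D z)
    (hd : d ∈ M.componentIn D z) : ∃ p : M.Walk c d, ∀ w ∈ p.support, w ∈ D := by
  obtain ⟨-, p, hp⟩ := mem_componentIn.1 hc
  obtain ⟨-, q, hq⟩ := mem_componentIn.1 hd
  refine ⟨p.reverse.append q, fun w hw => ?_⟩
  rw [Walk.mem_support_append_iff, Walk.support_reverse, List.mem_reverse] at hw
  exact hw.elim (hp w) (hq w)

end componentIn

def IsSimplicialIn (M : SimpleGraph V) (A : Finset V) (v : V) : Prop :=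
  M.IsClique {u | u ∈ A ∧ M.Adj v u}

theorem IsSimplicialIn.of_adj_mem {A B : Finset V} {v : V} (hv : M.IsSimplicialIn B v)
    (hAB : ∀ a ∈ A, M.Adj v a → a ∈ B) : M.IsSimplicialIn A v :=
  hv.subset fun a (ha : a ∈ A ∧ M.Adj v a) => show a ∈ B ∧ M.Adj v a from ⟨hAB a ha.1 ha.2, ha.2⟩

theorem IsSimplicialIn.of_erase [DecidableEq V] {A : Finset V} {k v : V}
    (hv : M.IsSimplicialIn (A.erase k) v) (hk : ∀ a ∈ A, a ≠ k → M.Adj k a) :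
    M.IsSimplicialIn A v := by
  intro a ha b hb hab
  by_cases hak : a = k
  · exact hak ▸ hk b hb.1 (hak ▸ hab).symm
  by_cases hbk : b = k
  · exact hbk ▸ (hk a ha.1 (hbk ▸ hab)).symm
  exact hv ⟨mem_erase.2 ⟨hak, ha.1⟩, ha.2⟩ ⟨mem_erase.2 ⟨hbk, hb.1⟩, hb.2⟩ hab

def IsDegenerateOn (G : SimpleGraph V) [DecidableRel G.Adj] (k : ℕ) (U : Finset V) : Prop :=
  ∀ B ⊆ U, B.Nonempty → ∃ v ∈ B, #{u ∈ B | G.Adj v u} ≤ k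

theorem IsDegenerateOn.mono_left {G : SimpleGraph V} [DecidableRel G.Adj] [DecidableRel M.Adj]
    (hGM : G ≤ M) {k : ℕ} {U : Finset V} (h : M.IsDegenerateOn k U) : G.IsDegenerateOn k U :=
  fun B hBU hB => (h B hBU hB).imp fun _ ⟨hv, hvk⟩ =>
    ⟨hv, (card_le_card (monotone_filter_right B fun _ _ huv => hGM huv)).trans hvk⟩

theorem Colorable.exists_isDegenerateOn_zero [Fintype V] {G : SimpleGraph V}
    [DecidableRel G.Adj] {m : ℕ} (hG : G.Colorable m) (hm : 0 < m) :
    ∃ U : Finset V, G.IsDegenerateOn 0 U ∧ (Fintype.card V : ℚ) / m ≤ #U := by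
  classical
  obtain ⟨c⟩ := hG
  have : Nonempty (Fin m) := ⟨⟨0, hm⟩⟩
  obtain ⟨i, -, hi⟩ := exists_le_card_fiber_of_nsmul_le_card_of_maps_to (s := univ) (t := univ)
    (f := c) (b := (Fintype.card V : ℚ) / m) (fun _ _ => mem_univ _) univ_nonempty
    (by simpa [nsmul_eq_mul] using (mul_div_cancel₀ _ (Nat.cast_ne_zero.2 hm.ne' : (m : ℚ) ≠ 0)).le)
  refine ⟨({v | c v = i} : Finset V), fun B hB ⟨v, hv⟩ => ⟨v, hv, ?_⟩, hi⟩
  simp only [nonpos_iff_eq_zero, card_eq_zero, filter_eq_empty_iff]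
  intro u hu hvu
  exact c.valid hvu ((mem_filter.1 (hB hv)).2.trans (mem_filter.1 (hB hu)).2.symm)

end SimpleGraph

namespace IsChordalGraph

variable {V : Type} {M : SimpleGraph V}

open Walk in
/-- A shortest such walk closes up through `x` to a cycle of length at least 4; a chord at `x`
would meet the interior of the walk, and any other chord would shorten the walk. -/
theorem eq_or_adj_of_walk_outside_closedNbhd (hM : IsChordalGraph M)
    {x u v : V} (hu : M.Adj x u) (hv : M.Adj x v) (p : M.Walk u v)
    (hp : ∀ z ∈ p.support, z ≠ u → z ≠ v → z ≠ x ∧ ¬ M.Adj x z) : u = v ∨ M.Adj u v := by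
  classical
  induction hn : p.length using Nat.strong_induction_on generalizing p with
  | _ n ih =>
  by_contra! hne
  set q := p.bypass
  have hq : ∀ z ∈ q.support, z ≠ u → z ≠ v → z ≠ x ∧ ¬ M.Adj x z :=
    fun z hz => hp z (p.support_bypass_subset_support hz)
  have hxq : x ∉ q.support := fun h => (hq x h hu.ne hv.ne).1 rfl
  have hlen : 2 ≤ q.length := by
    by_contra! h
    interval_cases hl : q.length
    · exact hne.1 (eq_of_length_eq_zero hl)
    · exact hne.2 (adj_of_length_eq_one hl)
  set c : M.Walk v v := cons hv.symm (cons hu q)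
  have hc : c.IsCycle := p.bypass_isPath.isCycle_cons_cons hxq hne.1 hu hv.symm
  obtain ⟨a, b, ha, hb, hab, hch⟩ := hM c hc (by simp [c]; omega)
  have chord_avoids_x : ∀ a b, a ∈ c.support → b ∈ c.support → M.Adj a b →
      s(a, b) ∉ c.edges → a ≠ x := by
    rintro a b - hb hab hch rfl
    have hbq : b ∈ q.support := by
      simp only [c, support_cons, List.mem_cons] at hb
      rcases hb with rfl | rfl | hb
      · exact q.end_mem_support
      · exact absurd hab (M.loopless.irrefl _)
      · exact hb
    by_cases hbu : b = u
    · subst hbu; simp [c] at hch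
    by_cases hbv : b = v
    · subst hbv; simp [c, Sym2.eq_swap] at hch
    exact (hq b hbq hbu hbv).2 hab
  have in_q : ∀ z ∈ c.support, z ≠ x → z ∈ q.support := by
    intro z hz hzx
    simp only [c, support_cons, List.mem_cons] at hz
    rcases hz with rfl | rfl | hz
    exacts [q.end_mem_support, absurd rfl hzx, hz]
  obtain ⟨r, hr, hrq⟩ := q.exists_shorter_of_chord
    (in_q a ha (chord_avoids_x a b ha hb hab hch))
    (in_q b hb (chord_avoids_x b a hb ha hab.symm (by rwa [Sym2.eq_swap])))
    hab (fun h => hch (by simp [c, h]))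
  have hrn : r.length < n := by
    have : q.length ≤ p.length := p.length_bypass_le_length
    omega
  exact (ih r.length hrn r (fun z hz => hq z (hrq hz)) rfl).elim hne.1 hne.2

theorem isClique_of_adj_componentIn (hM : IsChordalGraph M) {D S : Finset V} {x z : V}
    (hD : ∀ d ∈ D, d ≠ x ∧ ¬ M.Adj x d)
    (hS : ∀ s ∈ S, M.Adj x s ∧ ∃ c ∈ M.componentIn D z, M.Adj c s) :
    M.IsClique (S : Set V) := by
  intro s hs s' hs' hss'
  obtain ⟨hxs, c, hc, hcs⟩ := hS s hs
  obtain ⟨hxs', c', hc', hcs'⟩ := hS s' hs'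
  obtain ⟨p, hp⟩ := exists_walk_of_mem_componentIn hc hc'
  refine (hM.eq_or_adj_of_walk_outside_closedNbhd hxs hxs'
    (Walk.cons hcs.symm (p.concat hcs')) fun w hw hws hws' => ?_).resolve_left hss'
  simp only [Walk.support_cons, Walk.support_concat, List.mem_cons, List.mem_append,
    List.not_mem_nil, or_false] at hw
  rcases hw with rfl | hw | rfl
  · exact absurd rfl hws
  · exact hD w (hp w hw)
  · exact absurd rfl hws'

/-- For a non-neighbour `z` of `x`, the component `C` of `z` in `A \ N[x]` and its
neighbourhood `S` in `A`: `S` separates `C` from `x`, and it is a clique because each of its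
vertices sees both `x` and `C`. -/
theorem exists_clique_separator [DecidableEq V] (hM : IsChordalGraph M) {A : Finset V}
    {x z : V} (hxA : x ∈ A) (hzA : z ∈ A) (hzx : z ≠ x) (hxz : ¬ M.Adj x z) :
    ∃ C S : Finset V, z ∈ C ∧ (∀ c ∈ C, c ≠ x ∧ ¬ M.Adj x c) ∧ C ∪ S ⊂ A ∧ Disjoint C S ∧
      M.IsClique (S : Set V) ∧ ∀ c ∈ C, ∀ a ∈ A, M.Adj c a → a ∈ C ∪ S := by
  classical
  set D := {c ∈ A | c ≠ x ∧ ¬ M.Adj x c}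
  set C := M.componentIn D z
  set S := {s ∈ A \ C | ∃ c ∈ C, M.Adj c s}
  have hCD : ∀ c ∈ C, c ∈ A ∧ c ≠ x ∧ ¬ M.Adj x c := fun c hc => by
    simpa [D] using componentIn_subset hc
  have hSx : ∀ s ∈ S, M.Adj x s := by
    intro s hs
    obtain ⟨⟨hsA, hsC⟩, c, hc, hcs⟩ := by simpa [S] using hs
    by_contra hxs
    have hsx : s ≠ x := by rintro rfl; exact (hCD c hc).2.2 hcs.symm
    exact hsC (mem_componentIn_of_adj hc (by simp [D, hsA, hsx, hxs]) hcs)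
  refine ⟨C, S, self_mem_componentIn (by simp [D, hzA, hzx, hxz]), fun c hc => (hCD c hc).2,
    ?_, ?_, ?_, fun c hc a ha hca => ?_⟩
  · refine (ssubset_iff_of_subset (union_subset (fun c hc => (hCD c hc).1) ?_)).2
      ⟨x, hxA, fun hx => ?_⟩
    · exact fun s hs => (mem_sdiff.1 (mem_filter.1 hs).1).1
    · rcases mem_union.1 hx with hx | hx
      exacts [(hCD x hx).2.1 rfl, M.loopless.irrefl x (hSx x hx)]
  · exact Finset.disjoint_left.2 fun c hc hcS => (mem_sdiff.1 (mem_filter.1 hcS).1).2 hc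
  · exact hM.isClique_of_adj_componentIn (fun d hd => (mem_filter.1 hd).2)
      fun s hs => ⟨hSx s hs, (mem_filter.1 hs).2⟩
  · by_cases haC : a ∈ C
    · exact mem_union_left _ haC
    · exact mem_union_right _ (by simp [S, ha, haC]; exact ⟨c, hc, hca⟩)

/-- Dirac's lemma; the clique `K` is what lets the induction go through, where it is the
separator. -/
theorem exists_isSimplicialIn [DecidableEq V] (hM : IsChordalGraph M) (A K : Finset V)
    (hKA : K ⊆ A) (hK : M.IsClique (K : Set V)) (hAK : (A \ K).Nonempty) :
    ∃ v ∈ A \ K, M.IsSimplicialIn A v := by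
  classical
  induction A using Finset.strongInduction generalizing K with
  | H A ih =>
  by_cases hx : ∃ x ∈ A, (∀ k ∈ K, k = x ∨ M.Adj x k) ∧ ∃ z ∈ A, z ≠ x ∧ ¬ M.Adj x z
  · obtain ⟨x, hxA, hKx, z, hzA, hzx, hxz⟩ := hx
    obtain ⟨C, S, hzC, hCx, hCSA, hCS, hS, hCcl⟩ := hM.exists_clique_separator hxA hzA hzx hxz
    obtain ⟨v, hv, hvs⟩ := ih (C ∪ S) hCSA S subset_union_right hS
      ⟨z, mem_sdiff.2 ⟨mem_union_left _ hzC, Finset.disjoint_left.1 hCS hzC⟩⟩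
    have hvC : v ∈ C := (mem_union.1 (mem_sdiff.1 hv).1).resolve_right (mem_sdiff.1 hv).2
    refine ⟨v, mem_sdiff.2 ⟨hCSA.1 (mem_union_left _ hvC), fun hvK => ?_⟩,
      hvs.of_adj_mem (hCcl v hvC)⟩
    rcases hKx v hvK with rfl | h
    exacts [(hCx v hvC).1 rfl, (hCx v hvC).2 h]
  push Not at hx
  obtain rfl | ⟨k, hk⟩ := K.eq_empty_or_nonempty
  · obtain ⟨v, hv⟩ := hAK
    refine ⟨v, hv, fun a ha b hb hab => hx a ha.1 (by simp) b hb.1 hab.symm⟩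
  have hkA := hKA hk
  have hsdiff : A.erase k \ K.erase k = A \ K := by
    ext a; by_cases a = k <;> simp_all
  obtain ⟨v, hv, hvs⟩ := ih (A.erase k) (erase_ssubset hkA) (K.erase k)
    (erase_subset_erase k hKA) (hK.subset (by simp)) (hsdiff ▸ hAK)
  refine ⟨v, hsdiff ▸ hv, hvs.of_erase fun a ha hak => hx k hkA (fun k' hk' => ?_) a ha hak⟩
  exact (eq_or_ne k' k).imp id fun h => hK hk hk' h.symm

theorem isDegenerateOn [DecidableEq V] [DecidableRel M.Adj]
    (hM : IsChordalGraph M) {k : ℕ} {A : Finset V}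
    (hA : ∀ s ⊆ A, M.IsClique (s : Set V) → #s ≤ k + 1) : M.IsDegenerateOn k A := by
  intro B hBA hB
  obtain ⟨v, hv, hvs⟩ := hM.exists_isSimplicialIn B ∅ (empty_subset B) (by simp) (by simpa)
  rw [sdiff_empty] at hv
  set N := {u ∈ B | M.Adj v u}
  have hvN : v ∉ N := by simp [N]
  have hclique : M.IsClique (insert v N : Finset V) := by
    rw [coe_insert, coe_filter]
    exact IsClique.insert hvs fun u hu _ => hu.2
  refine ⟨v, hv, ?_⟩
  have := hA (insert v N) (insert_subset (hBA hv) ((filter_subset _ B).trans hBA)) hclique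
  rw [card_insert_of_notMem hvN] at this
  exact Nat.le_of_succ_le_succ this

/-- Removing a smallest colour class of a `(k + 2)`-colouring leaves cliques of size at most
`k + 1`. -/
theorem exists_isDegenerateOn_of_colorable [Fintype V] [DecidableEq V]
    [DecidableRel M.Adj] (hM : IsChordalGraph M) {k : ℕ} (hc : M.Colorable (k + 2)) :
    ∃ U : Finset V, M.IsDegenerateOn k U ∧
      ((k + 1) * Fintype.card V : ℚ) / (k + 2) ≤ #U := by
  obtain ⟨c⟩ := hc
  obtain ⟨i, -, hi⟩ := exists_card_fiber_le_of_card_le_nsmul (s := univ) (t := univ)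
    (f := c) (b := (Fintype.card V : ℚ) / (k + 2)) univ_nonempty
    (by simpa [nsmul_eq_mul] using (mul_div_cancel₀ _ (by positivity)).ge)
  refine ⟨({v | c v ≠ i} : Finset V), hM.isDegenerateOn fun s hs hsc => ?_, ?_⟩
  · calc #s ≤ #(univ.erase i) := card_le_card_of_injOn c
          (fun v hv => mem_erase.2 ⟨(mem_filter.1 (hs hv)).2, mem_univ _⟩)
          fun u hu v hv huv => by_contra fun h => c.valid (hsc hu hv h) huv
      _ = k + 1 := by simp
  · have hsplit := card_filter_add_card_filter_not (s := univ) fun v => c v = i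
    rw [card_univ] at hsplit
    have : (#{v | c v ≠ i} : ℚ) = Fintype.card V - #{v | c v = i} := by
      rw [← hsplit]; push_cast; ring
    rw [this, div_le_iff₀ (by positivity)]
    rw [le_div_iff₀ (by positivity)] at hi
    linarith

end IsChordalGraph

namespace DPCover

variable {V W : Type} {G : SimpleGraph V} {H : SimpleGraph W} {L : V → Finset W}

theorem eq_of_mem (cov : DPCover G H L) {w : W} {u v : V} (hu : w ∈ L u) (hv : w ∈ L v) :
    u = v :=
  (cov.partition w).unique hu hv

/-- By the matching condition each coloured neighbour of `v` blocks at most one colour of `v`. -/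
theorem exists_mem_forall_not_adj [DecidableRel G.Adj] (cov : DPCover G H L)
    {U : Finset V} {f : V → W} (hf : ∀ u ∈ U, f u ∈ L u) {v : V} (hvU : v ∉ U)
    (hv : #{u ∈ U | G.Adj v u} < #(L v)) : ∃ b ∈ L v, ∀ u ∈ U, ¬ H.Adj (f u) b := by
  classical
  set blocked := {u ∈ U | G.Adj v u}.biUnion fun u => {b ∈ L v | H.Adj (f u) b}
  have hblocked : #blocked < #(L v) := by
    refine lt_of_le_of_lt ?_ hv
    simpa using card_biUnion_le_card_mul _ _ 1 fun u hu => card_le_one.2 fun b hb b' hb' => by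
      simp only [mem_filter] at hu hb hb'
      exact cov.matching hu.2.symm _ (hf u hu.1) b hb.1 b' hb'.1 hb.2 hb'.2
  obtain ⟨b, hb, hbB⟩ := exists_mem_notMem_of_card_lt_card hblocked
  refine ⟨b, hb, fun u hu hub => hbB (mem_biUnion.2 ⟨u, mem_filter.2 ⟨hu, ?_⟩, ?_⟩)⟩
  · by_contra huv
    exact cov.nonadj (fun h : u = v => hvU (h ▸ hu)) (fun h => huv h.symm) _ (hf u hu) b hb hub
  · exact mem_filter.2 ⟨hb, hub⟩

theorem exists_section_of_isDegenerateOn [DecidableRel G.Adj] (cov : DPCover G H L) {k : ℕ}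
    (hL : ∀ v, k < #(L v)) {U : Finset V} (hU : G.IsDegenerateOn k U) :
    ∃ f : V → W, (∀ v ∈ U, f v ∈ L v) ∧ ∀ u ∈ U, ∀ v ∈ U, ¬ H.Adj (f u) (f v) := by
  classical
  induction U using Finset.strongInduction with
  | H U ih =>
  obtain rfl | hU0 := U.eq_empty_or_nonempty
  · exact ⟨fun v => (card_pos.1 (k.zero_le.trans_lt (hL v))).choose, by simp, by simp⟩
  obtain ⟨v, hvU, hvk⟩ := hU U subset_rfl hU0
  obtain ⟨f, hf, hfi⟩ := ih (U.erase v) (erase_ssubset hvU)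
    fun B hB => hU B (hB.trans (erase_subset v U))
  have hvk' : #{u ∈ U.erase v | G.Adj v u} < #(L v) :=
    (card_le_card (filter_subset_filter _ (erase_subset v U))).trans_lt (hvk.trans_lt (hL v))
  obtain ⟨b, hb, hbf⟩ := cov.exists_mem_forall_not_adj hf (notMem_erase v U) hvk'
  have hbf' : ∀ u ∈ U, u ≠ v → ¬ H.Adj (f u) b := fun u hu huv => hbf u (mem_erase.2 ⟨huv, hu⟩)
  refine ⟨Function.update f v b, fun u hu => ?_, fun u hu w hw => ?_⟩
  · rcases eq_or_ne u v with rfl | huv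
    · simpa
    · simpa [huv] using hf u (mem_erase.2 ⟨huv, hu⟩)
  rcases eq_or_ne u v with rfl | huv <;> rcases eq_or_ne w u with rfl | hwu
  · exact H.loopless.irrefl _
  · simpa [hwu] using fun h => hbf' w hw hwu h.symm
  · exact H.loopless.irrefl _
  rcases eq_or_ne w v with rfl | hwv
  · simpa [huv] using hbf' u hu huv
  · simpa [huv, hwv] using hfi u (mem_erase.2 ⟨huv, hu⟩) w (mem_erase.2 ⟨hwv, hw⟩)

theorem exists_isIndepFinset_of_isDegenerateOn [DecidableRel G.Adj] (cov : DPCover G H L)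
    {k : ℕ} (hL : ∀ v, k < #(L v)) {U : Finset V} (hU : G.IsDegenerateOn k U) :
    ∃ S : Finset W, IsIndepFinset H S ∧ #S = #U := by
  classical
  obtain ⟨f, hf, hfi⟩ := cov.exists_section_of_isDegenerateOn hL hU
  refine ⟨U.image f, ?_,
    card_image_of_injOn fun u hu w hw huw => cov.eq_of_mem (hf u hu) (huw ▸ hf w hw)⟩
  simp only [IsIndepFinset, mem_image]
  rintro _ ⟨u, hu, rfl⟩ _ ⟨w, hw, rfl⟩
  exact hfi u hu w hw

theorem exists_mem_of_card_eq [Fintype V] (cov : DPCover G H L) {S : Finset W}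
    (hS : IsIndepFinset H S) (hSV : #S = Fintype.card V) (v : V) : ∃ w ∈ S, w ∈ L v := by
  classical
  by_contra! hv
  have hsub : S ⊆ (univ.erase v).biUnion fun u => {w ∈ S | w ∈ L u} := by
    intro w hw
    obtain ⟨u, hu, -⟩ := cov.partition w
    exact mem_biUnion.2 ⟨u, mem_erase.2 ⟨fun h => hv w hw (h ▸ hu), mem_univ u⟩,
      mem_filter.2 ⟨hw, hu⟩⟩
  have hle := (card_le_card hsub).trans (card_biUnion_le_card_mul _ _ 1 fun u _ =>
    card_le_one.2 fun a ha b hb => by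
      simp only [mem_filter] at ha hb
      by_contra hab
      exact hS a ha.1 b hb.1 (cov.cliques u a ha.2 b hb.2 hab))
  rw [card_erase_of_mem (mem_univ v), card_univ] at hle
  have : 0 < Fintype.card V := Fintype.card_pos_iff.2 ⟨v⟩
  omega

end DPCover

theorem IsIndepFinset.card_le_indepNum {W : Type} [Fintype W] {H : SimpleGraph W}
    {S : Finset W} (hS : IsIndepFinset H S) : #S ≤ _root_.indepNum H :=
  le_csSup ⟨Fintype.card W, by rintro _ ⟨S', -, rfl⟩; exact card_le_univ S'⟩ ⟨S, hS, rfl⟩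

theorem dpCover_boxProd_top {V : Type} (G : SimpleGraph V) (m : ℕ) :
    DPCover G (G □ (⊤ : SimpleGraph (Fin m))) fun v => {v} ×ˢ univ where
  partition w := ⟨w.1, by simp, fun v hv => (mem_singleton.1 (mem_product.1 hv).1).symm⟩
  cliques v a ha b hb hab := by
    simp only [mem_product, mem_singleton] at ha hb
    simp only [boxProd_adj, top_adj, ha.1, hb.1, and_true]
    exact Or.inr fun h => hab (Prod.ext (ha.1.trans hb.1.symm) h)
  matching u v huv a ha b hb b' hb' hab hab' := by
    simp only [mem_product, mem_singleton, mem_univ, and_true] at ha hb hb'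
    simp only [boxProd_adj, ha, hb, hb', top_adj, huv.ne, and_false, or_false] at hab hab'
    exact Prod.ext (hb.trans hb'.symm) (hab.2.symm.trans hab'.2)
  nonadj u v huv hnuv a ha b hb hab := by
    simp only [mem_product, mem_singleton, mem_univ, and_true] at ha hb
    simp only [boxProd_adj, ha, hb, top_adj] at hab
    tauto

section DPColoring

variable {V : Type} [Fintype V] {G : SimpleGraph V}

def DPColorable (G : SimpleGraph V) (m : ℕ) : Prop :=
  ∀ (W : Type) (_ : Fintype W) (H : SimpleGraph W) (L : V → Finset W),
    DPCover G H L → (∀ v, #(L v) = m) →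
    ∃ S : Finset W, IsIndepFinset H S ∧ #S = Fintype.card V

theorem chiDP_le {m : ℕ} (h : DPColorable G m) : chiDP G ≤ m :=
  Nat.sInf_le h

theorem dpColorable_chiDP {m : ℕ} (h : DPColorable G m) : DPColorable G (chiDP G) :=
  Nat.sInf_mem (s := {m | DPColorable G m}) ⟨m, h⟩

theorem dpColorable_of_isDegenerateOn [DecidableRel G.Adj] {k m : ℕ}
    (hG : G.IsDegenerateOn k univ) (hkm : k < m) : DPColorable G m :=
  fun _ _ _ _ cov hL => by
    simpa using cov.exists_isIndepFinset_of_isDegenerateOn (fun v => (hL v).symm ▸ hkm) hG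

theorem DPColorable.colorable {m : ℕ} (h : DPColorable G m) : G.Colorable m := by
  obtain ⟨S, hS, hSV⟩ := h _ inferInstance _ _ (dpCover_boxProd_top G m) (by simp)
  choose f hfS hfL using (dpCover_boxProd_top G m).exists_mem_of_card_eq hS hSV
  simp only [mem_product, mem_singleton, mem_univ, and_true] at hfL
  refine ⟨Coloring.mk (fun v => (f v).2) fun {u v} huv heq => hS _ (hfS u) _ (hfS v) ?_⟩
  simp [boxProd_adj, hfL, huv, heq]

theorem le_alphaDP {t b : ℕ} (h : ∀ (W : Type) [Fintype W] (H : SimpleGraph W)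
      (L : V → Finset W), DPCover G H L → (∀ v, #(L v) = t) →
      ∃ S : Finset W, IsIndepFinset H S ∧ b ≤ #S) :
    b ≤ alphaDP G t := by
  refine le_csInf ⟨_, V × Fin t, inferInstance, _, _, dpCover_boxProd_top G t, by simp, rfl⟩ ?_
  rintro _ ⟨W, _, H, L, cov, hL, rfl⟩
  obtain ⟨S, hS, hbS⟩ := h W H L cov hL
  exact hbS.trans hS.card_le_indepNum

theorem card_le_alphaDP_of_dpColorable {t : ℕ} (h : DPColorable G t) :
    Fintype.card V ≤ alphaDP G t :=
  le_alphaDP fun W _ H L cov hL => (h W inferInstance H L cov hL).imp fun _ hS => ⟨hS.1, hS.2.ge⟩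

theorem card_le_alphaDP_of_isDegenerateOn [DecidableRel G.Adj] {k t : ℕ} (hkt : k < t)
    {U : Finset V} (hU : G.IsDegenerateOn k U) : #U ≤ alphaDP G t :=
  le_alphaDP fun _ _ _ _ cov hL =>
    (cov.exists_isIndepFinset_of_isDegenerateOn (fun v => (hL v).symm ▸ hkt) hU).imp
      fun _ hS => ⟨hS.1, hS.2.ge⟩

end DPColoring

/-- Every graph of treewidth at most 2 (in particular every series-parallel graph) is
partially DP-nice: if there is a chordal graph `M` on the same vertex set as `G` with
`E(G) ⊆ E(M)` and `ω(M) ≤ 3`, then `G` is partially DP-nice. -/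
theorem partiallyDPNice_of_treewidth_le_two {V : Type} [Fintype V]
    (G : SimpleGraph V) (M : SimpleGraph V) (hM : IsChordalGraph M) (hle : G ≤ M)
    (hclique : M.cliqueNum ≤ 3) : PartiallyDPNice G := by
  classical
  intro t ht htχ
  have hMdeg : M.IsDegenerateOn 2 univ :=
    hM.isDegenerateOn fun s _ hs => hs.card_le_cliqueNum.trans hclique
  have hG3 : DPColorable G 3 := dpColorable_of_isDegenerateOn (hMdeg.mono_left hle) (by norm_num)
  have hχ := dpColorable_chiDP hG3
  obtain rfl | rfl | ⟨rfl, hχ3⟩ : t = chiDP G ∨ t = 1 ∨ t = 2 ∧ chiDP G = 3 := by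
    have := chiDP_le hG3
    omega
  · rw [mul_div_cancel_left₀ _ (by exact_mod_cast (by omega : chiDP G ≠ 0))]
    exact_mod_cast card_le_alphaDP_of_dpColorable hχ
  · obtain ⟨U, hU, hUcard⟩ := hχ.colorable.exists_isDegenerateOn_zero htχ
    rw [Nat.cast_one, one_mul]
    exact hUcard.trans (by exact_mod_cast card_le_alphaDP_of_isDegenerateOn zero_lt_one hU)
  · obtain ⟨U, hU, hUcard⟩ := hM.exists_isDegenerateOn_of_colorable (k := 1)
      (dpColorable_of_isDegenerateOn hMdeg (by norm_num)).colorable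
    rw [hχ3]
    norm_num at hUcard ⊢
    exact hUcard.trans
      (by exact_mod_cast card_le_alphaDP_of_isDegenerateOn one_lt_two (hU.mono_left hle))
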